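/- Let L be a left Leibniz algebra over a field k of characteristic 0, L̄ = L/L₀ its Lie quotient (L₀ = span of [a,b]+[b,a]), and V a module over the Lie algebra L̄. On W = V ⊕ (L⊗V) define for x ∈ L linear maps ρ₀(x): v ↦ x̄v, a⊗v ↦ a⊗x̄v + [x,a]⊗v, and ρ₁(x): v ↦ x⊗v, a⊗v ↦ 0. Then [ρ₀(x),ρ₀(y)] = ρ₀([x,y]) and [ρ₀(x),ρ₁(y)] = ρ₁([x,y]) for all x,y ∈ L, and the map x ↦ (ρ₀(x),ρ₁(x)) ∈ gl(W)×gl(W) is injective when V ≠ 0. -/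
import Mathlib


open TensorProduct

/-- `ρ₀(x)` on `W = V ⊕ (L ⊗ V)`: `v ↦ x̄v`, `a⊗v ↦ a⊗x̄v + [x,a]⊗v`.
Here `α : L → End V` is the action of the Lie quotient `L̄ = L/L₀` pulled
back to `L`. -/
noncomputable def rho0 {k L V : Type*} [Field k] [AddCommGroup L] [Module k L]
    [AddCommGroup V] [Module k V]
    (brk : L →ₗ[k] L →ₗ[k] L) (α : L →ₗ[k] Module.End k V) (x : L) :
    Module.End k (V × (L ⊗[k] V)) :=
  LinearMap.prodMap (α x)
    (LinearMap.lTensor L (α x) + TensorProduct.map (brk x) LinearMap.id)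

/-- `ρ₁(x)` on `W = V ⊕ (L ⊗ V)`: `v ↦ x⊗v`, `a⊗v ↦ 0`. -/
noncomputable def rho1 {k L V : Type*} [Field k] [AddCommGroup L] [Module k L]
    [AddCommGroup V] [Module k V] (x : L) :
    Module.End k (V × (L ⊗[k] V)) :=
  LinearMap.prod 0 ((TensorProduct.mk k L V x).comp (LinearMap.fst k V (L ⊗[k] V)))

/-- for a left Leibniz algebra `L` over a field of char 0 and a
module `V` over the Lie quotient `L̄ = L/L₀` (encoded by an action
`α : L → End V` vanishing on all `[a,b]+[b,a]` and satisfying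
`α [x,y] = [α x, α y]`), the maps `ρ₀, ρ₁ : L → End (V ⊕ (L⊗V))` satisfy
`[ρ₀x, ρ₀y] = ρ₀[x,y]`, `[ρ₀x, ρ₁y] = ρ₁[x,y]`, and `x ↦ (ρ₀x, ρ₁x)` is
injective when `V ≠ 0`. -/
theorem stmt12 {k L V : Type*} [Field k] [CharZero k]
    [AddCommGroup L] [Module k L] [AddCommGroup V] [Module k V]
    (brk : L →ₗ[k] L →ₗ[k] L)
    (leib : ∀ x y z : L,
      brk x (brk y z) = brk (brk x y) z + brk y (brk x z))
    (α : L →ₗ[k] Module.End k V)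
    (hα0 : ∀ a b : L, α (brk a b + brk b a) = 0)
    (hαLie : ∀ x y : L, α (brk x y) = α x * α y - α y * α x) :
    (∀ x y : L,
      rho0 brk α x * rho0 brk α y - rho0 brk α y * rho0 brk α x =
        rho0 brk α (brk x y)) ∧
    (∀ x y : L,
      rho0 brk α x * rho1 (k := k) (V := V) y -
        rho1 (k := k) (V := V) y * rho0 brk α x =
          rho1 (k := k) (V := V) (brk x y)) ∧
    (Nontrivial V →
      Function.Injective fun x : L =>
        (rho0 brk α x, rho1 (k := k) (V := V) x)) := by
  refine ⟨fun x y => ?_, fun x y => ?_, fun hV => ?_⟩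
  · ext v
    · simp [rho0, hαLie]
    · simp [rho0, hαLie]
    · simp [rho0]
    · simp [rho0, hαLie, leib x y v, tmul_add, add_tmul]
      abel
  · ext v
    · simp [rho0, rho1]
    · simp [rho0, rho1, tmul_add, add_tmul]
    · simp [rho0, rho1]
    · simp [rho0, rho1]
  · intro x y h
    obtain ⟨v, hv⟩ := exists_ne (0 : V)
    have h1 : rho1 (k := k) (V := V) x = rho1 (k := k) (V := V) y := congrArg Prod.snd h
    have h2 : x ⊗ₜ[k] v = y ⊗ₜ[k] v := by
      have := congrArg (fun f => (f (v, 0)).2) h1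
      simpa [rho1] using this
    have h3 : (x - y) ⊗ₜ[k] v = 0 := by rw [sub_tmul, h2, sub_self]
    obtain ⟨f, hf⟩ : ∃ f : V →ₗ[k] k, f v ≠ 0 := by
      by_contra hc
      push_neg at hc
      exact hv ((Module.forall_dual_apply_eq_zero_iff k v).mp hc)
    have h4 : (f v) • (x - y) = 0 := by
      have := congrArg (TensorProduct.rid k L ∘ LinearMap.lTensor L f) h3
      simpa using this
    rcases smul_eq_zero.mp h4 with h | h
    · exact absurd h hf
    · exact sub_eq_zero.mp h
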